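/- arXiv:1510.08997 — 6 statements merged into one kernel-verified Lean document; each statement's English description precedes it below -/
import Mathlib

section
/- Let n ≥ 1 be an integer and α ∈ [−1, 1]. Define the map A_α : (0,∞)^{2n} → ℝ^{2n} by (A_α u)_i = Σ_{j=1}^{2n} (u_j + u_i)^α (u_j − u_i). Then for all vectors u, v ∈ (0,∞)^{2n} one has Σ_{i=1}^{2n} ((A_α u)_i − (A_α v)_i) · sgn⁺(u_i − v_i) ≤ 0; that is, the generalized Carleman interaction rate k_α(a,b) = (a+b)^α is T-dissipative. -/
/-!
Write `φ(x, y) = (x + y)^α (x - y)`, so that `(A_α u)_i = ∑_j φ(u_j, u_i)`. The kernel `φ` is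
antisymmetric, and for `|α| ≤ 1` it is nondecreasing in its first argument on `[0, ∞)`, since
`∂ₓφ = (x + y)^(α-1) (α (x - y) + x + y)` and `|α (x - y)| ≤ x + y`. By antisymmetry the
dissipation sum equals `½ ∑_{i,j} (φ(u_j,u_i) - φ(v_j,v_i)) (sgn⁺(u_i-v_i) - sgn⁺(u_j-v_j))`, and each
term is `≤ 0`: when `u_i > v_i` and `u_j ≤ v_j`, monotonicity gives
`φ(u_j, u_i) ≤ φ(u_j, v_i) ≤ φ(v_j, v_i)`.
-/

/-- `sgn⁺(a) = 1` if `a > 0` and `0` otherwise. -/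
noncomputable def sgnPlus (a : ℝ) : ℝ := if 0 < a then 1 else 0

open Set

section Kernel

variable {α : ℝ}

lemma rpow_add_mul_sub_swap (α x y : ℝ) : (y + x) ^ α * (y - x) = -((x + y) ^ α * (x - y)) := by
  rw [add_comm y x]; ring

lemma hasDerivAt_rpow_add_mul_sub {c x : ℝ} (hxc : 0 < x + c) :
    HasDerivAt (fun x => (x + c) ^ α * (x - c)) ((x + c) ^ (α - 1) * (α * (x - c) + (x + c))) x := by
  have hpow : HasDerivAt (fun x => (x + c) ^ α) (α * (x + c) ^ (α - 1)) x := by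
    simpa using ((hasDerivAt_id x).add_const c).rpow_const (p := α) (Or.inl hxc.ne')
  refine (hpow.mul ((hasDerivAt_id x).sub_const c)).congr_deriv ?_
  rw [id, mul_one, Real.rpow_sub_one hxc.ne']
  field_simp

lemma monotoneOn_rpow_add_mul_sub (hα : |α| ≤ 1) {c : ℝ} (hc : 0 < c) :
    MonotoneOn (fun x => (x + c) ^ α * (x - c)) (Ici 0) := by
  have hpos : ∀ x ∈ Ici (0 : ℝ), 0 < x + c := fun x hx => by linarith [mem_Ici.1 hx]
  refine monotoneOn_of_hasDerivWithinAt_nonneg (convex_Ici 0)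
    (fun x hx => (hasDerivAt_rpow_add_mul_sub (hpos x hx)).continuousAt.continuousWithinAt)
    (fun x hx => (hasDerivAt_rpow_add_mul_sub
      (hpos x (interior_subset hx))).hasDerivWithinAt) fun x hx => ?_
  have hx : 0 ≤ x := interior_subset (s := Ici 0) hx
  have hbound : |α * (x - c)| ≤ x + c := by
    rw [abs_mul]
    calc |α| * |x - c| ≤ 1 * |x - c| := by gcongr
      _ ≤ x + c := by rw [one_mul, abs_le]; constructor <;> linarith
  exact mul_nonneg (Real.rpow_nonneg (hpos x hx).le _) (by linarith [neg_abs_le (α * (x - c))])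

lemma rpow_add_mul_sub_le (hα : |α| ≤ 1) {a b c d : ℝ} (hc : 0 < c) (hb : 0 < b)
    (hca : c ≤ a) (hbd : b ≤ d) :
    (b + a) ^ α * (b - a) ≤ (d + c) ^ α * (d - c) := by
  have h_first : (c + b) ^ α * (c - b) ≤ (a + b) ^ α * (a - b) :=
    monotoneOn_rpow_add_mul_sub hα hb hc.le (hc.trans_le hca).le hca
  have h_second : (b + c) ^ α * (b - c) ≤ (d + c) ^ α * (d - c) :=
    monotoneOn_rpow_add_mul_sub hα hc hb.le (hb.trans_le hbd).le hbd
  rw [rpow_add_mul_sub_swap α a b]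
  rw [rpow_add_mul_sub_swap α c b] at h_second
  linarith

end Kernel

lemma sum_sum_antisymm_mul_nonpos {ι : Type*} [Fintype ι] (D : ι → ι → ℝ) (s : ι → ℝ)
    (hD : ∀ i j, D i j = -D j i) (hterm : ∀ i j, D j i * (s i - s j) ≤ 0) :
    ∑ i, (∑ j, D j i) * s i ≤ 0 := by
  have hswap : ∑ i, ∑ j, D j i * s i = -∑ i, ∑ j, D j i * s j := by
    rw [Finset.sum_comm, ← Finset.sum_neg_distrib]
    refine Finset.sum_congr rfl fun i _ => ?_
    rw [← Finset.sum_neg_distrib]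
    exact Finset.sum_congr rfl fun j _ => by rw [hD]; ring
  have htwice : 2 * ∑ i, ∑ j, D j i * s i = ∑ i, ∑ j, D j i * (s i - s j) := by
    simp only [mul_sub, Finset.sum_sub_distrib]
    linarith
  have hnonpos : ∑ i, ∑ j, D j i * (s i - s j) ≤ 0 :=
    Finset.sum_nonpos fun i _ => Finset.sum_nonpos fun j _ => hterm i j
  simp only [Finset.sum_mul]
  linarith

lemma rpow_add_mul_sub_sub_mul_sgnPlus_sub_nonpos {α : ℝ} (hα : |α| ≤ 1) {ι : Type*}
    {u v : ι → ℝ} (hu : ∀ i, 0 < u i) (hv : ∀ i, 0 < v i) (i j : ι) :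
    ((u j + u i) ^ α * (u j - u i) - (v j + v i) ^ α * (v j - v i)) *
      (sgnPlus (u i - v i) - sgnPlus (u j - v j)) ≤ 0 := by
  unfold sgnPlus
  split_ifs with hi hj hj
  · simp
  · have := rpow_add_mul_sub_le hα (hv i) (hu j) (a := u i) (d := v j) (by linarith) (by linarith)
    linarith
  · have := rpow_add_mul_sub_le hα (hv j) (hu i) (a := u j) (d := v i) (by linarith) (by linarith)
    rw [rpow_add_mul_sub_swap α (u i), rpow_add_mul_sub_swap α (v i)]
    linarith
  · simp

theorem kalpha_T_dissipative_general (n : ℕ) (α : ℝ)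
    (hα : -1 ≤ α ∧ α ≤ 1)
    (u v : Fin (2 * n) → ℝ) (hu : ∀ i, 0 < u i) (hv : ∀ i, 0 < v i) :
    ∑ i, ((∑ j, (u j + u i) ^ α * (u j - u i)) -
        (∑ j, (v j + v i) ^ α * (v j - v i))) * sgnPlus (u i - v i) ≤ 0 := by
  simp only [← Finset.sum_sub_distrib]
  refine sum_sum_antisymm_mul_nonpos _ _ (fun i j => ?_)
    (rpow_add_mul_sub_sub_mul_sgnPlus_sub_nonpos (abs_le.2 hα) hu hv)
  rw [rpow_add_mul_sub_swap α (u j), rpow_add_mul_sub_swap α (v j)]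
  ring

/-- T-dissipativity of the generalized Carleman interaction rate
`k_α(a,b) = (a+b)^α` for `|α| ≤ 1`: the map
`(A_α u)_i = ∑_j (u_j + u_i)^α (u_j − u_i)` on `(0,∞)^{2n}` satisfies
`∑_i ((A_α u)_i − (A_α v)_i) · sgn⁺(u_i − v_i) ≤ 0`. -/
theorem kalpha_T_dissipative (n : ℕ) (hn : 1 ≤ n) (α : ℝ)
    (hα : -1 ≤ α ∧ α ≤ 1)
    (u v : Fin (2 * n) → ℝ) (hu : ∀ i, 0 < u i) (hv : ∀ i, 0 < v i) :
    ∑ i, ((∑ j, (u j + u i) ^ α * (u j - u i)) -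
        (∑ j, (v j + v i) ^ α * (v j - v i))) * sgnPlus (u i - v i) ≤ 0 :=
  kalpha_T_dissipative_general n α hα u v hu hv
end

section
/- Let n ≥ 3 be an integer, α ∈ (2/n, 1], and T ∈ ℝ, and let C_α > 0 be the constant with C_α^α = 2 n^{α−1}(n − 2/α). Then the function ρ(x,t) = C_α ((T − t)/|x|²)^{1/α} is an exact solution of the fast diffusion equation: at every (x,t) ∈ ℝⁿ × ℝ with x ≠ 0 and t < T one has ∂_t ρ = Σ_{i=1}^{n} ∂_{x_i}( n^{α−1} ρ^{−α} ∂_{x_i} ρ ). -/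
/-!
Away from the origin `ρ(·, t) = A |x|^(-2/α)` with `A = C_α (T - t)^(1/α)`, so `ρ^(-α) = A^(-α) |x|²`
and the flux `n^(α-1) ρ^(-α) ∇ρ` is the radial field `-(2/α) n^(α-1) A^(1-α) |x|^(-2/α) x`.
Since `div (|x|^(2p) x) = (n + 2p) |x|^(2p)`, both sides of the equation are multiples of
`|x|^(-2/α)`; the time exponents match because `(1 - α)/α = 1/α - 1`, and the coefficients match
exactly when `C_α^α = 2 n^(α-1) (n - 2/α)`.
-/

/-- Partial derivative in the `i`-th coordinate direction. -/
noncomputable def pd {n : ℕ} (i : Fin n) (f : EuclideanSpace ℝ (Fin n) → ℝ)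
    (x : EuclideanSpace ℝ (Fin n)) : ℝ :=
  fderiv ℝ f x (EuclideanSpace.single i (1 : ℝ))

open Filter Topology

section PartialDerivatives

variable {n : ℕ} (i : Fin n) {f g : EuclideanSpace ℝ (Fin n) → ℝ} {x : EuclideanSpace ℝ (Fin n)}

theorem HasFDerivAt.pd_eq {f' : EuclideanSpace ℝ (Fin n) →L[ℝ] ℝ} (h : HasFDerivAt f f' x) :
    pd i f x = f' (EuclideanSpace.single i 1) := by
  rw [pd, h.fderiv]

theorem Filter.EventuallyEq.pd_eq (h : f =ᶠ[𝓝 x] g) : pd i f x = pd i g x := by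
  rw [pd, pd, h.fderiv_eq]

theorem pd_const_mul (c : ℝ) : pd i (fun y => c * f y) x = c * pd i f x := by
  simp only [pd, ← smul_eq_mul, ← Pi.smul_def, fderiv_const_smul_field]
  rfl

theorem hasFDerivAt_norm_sq_rpow {E : Type*} [NormedAddCommGroup E] [InnerProductSpace ℝ E]
    (p : ℝ) {x : E} (hx : x ≠ 0) :
    HasFDerivAt (fun y : E => (‖y‖ ^ 2) ^ p) ((p * (‖x‖ ^ 2) ^ (p - 1)) • 2 • innerSL ℝ x) x :=
  (hasStrictFDerivAt_norm_sq x).hasFDerivAt.rpow_const (Or.inl (by positivity))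

theorem pd_norm_sq_rpow (p : ℝ) (hx : x ≠ 0) :
    pd i (fun y => (‖y‖ ^ 2) ^ p) x = 2 * p * (‖x‖ ^ 2) ^ (p - 1) * x i := by
  rw [(hasFDerivAt_norm_sq_rpow p hx).pd_eq]
  simp only [smul_apply, coe_innerSL_apply, EuclideanSpace.inner_single_right,
    Real.ringHom_apply, one_mul, nsmul_eq_mul, Nat.cast_ofNat, smul_eq_mul]
  ring

theorem pd_norm_sq_rpow_mul_apply (p : ℝ) (hx : x ≠ 0) :
    pd i (fun y => (‖y‖ ^ 2) ^ p * y i) x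
      = 2 * p * (‖x‖ ^ 2) ^ (p - 1) * x i ^ 2 + (‖x‖ ^ 2) ^ p := by
  have h : HasFDerivAt (fun y : EuclideanSpace ℝ (Fin n) => (‖y‖ ^ 2) ^ p * y i) _ x :=
    (hasFDerivAt_norm_sq_rpow p hx).mul (PiLp.hasFDerivAt_apply 2 x i)
  rw [h.pd_eq]
  simp only [add_apply, smul_apply, PiLp.proj_apply,
    PiLp.single_eq_same, coe_innerSL_apply, EuclideanSpace.inner_single_right, Real.ringHom_apply,
    one_mul, mul_one, nsmul_eq_mul, Nat.cast_ofNat, smul_eq_mul]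
  ring

theorem sum_pd_norm_sq_rpow_mul_apply (p : ℝ) (hx : x ≠ 0) :
    ∑ i, pd i (fun y => (‖y‖ ^ 2) ^ p * y i) x = (n + 2 * p) * (‖x‖ ^ 2) ^ p := by
  have hS : 0 < ‖x‖ ^ 2 := by positivity
  simp_rw [pd_norm_sq_rpow_mul_apply _ p hx, Finset.sum_add_distrib, ← Finset.mul_sum,
    ← EuclideanSpace.real_norm_sq_eq, Finset.sum_const, Finset.card_univ, Fintype.card_fin,
    nsmul_eq_mul, mul_assoc, ← Real.rpow_add_one hS.ne']
  ring_nf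

end PartialDerivatives

section Profile

variable {n : ℕ} {α β : ℝ}

theorem rpow_neg_mul_pd_mul_norm_sq_rpow (i : Fin n) {A : ℝ} (hA : 0 < A) (hβα : β * α = 1)
    {y : EuclideanSpace ℝ (Fin n)} (hy : y ≠ 0) :
    (A * (‖y‖ ^ 2) ^ (-β)) ^ (-α) * pd i (fun z => A * (‖z‖ ^ 2) ^ (-β)) y
      = -(2 * β * A ^ (1 - α)) * ((‖y‖ ^ 2) ^ (-β) * y i) := by
  have hS : 0 < ‖y‖ ^ 2 := by positivity
  have hpow : (A * (‖y‖ ^ 2) ^ (-β)) ^ (-α) = A ^ (-α) * ‖y‖ ^ 2 := by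
    rw [Real.mul_rpow hA.le (by positivity), ← Real.rpow_mul hS.le, neg_mul_neg, hβα,
      Real.rpow_one]
  have hA1 : A ^ (1 - α) = A ^ (-α) * A := by
    rw [sub_eq_neg_add, Real.rpow_add_one hA.ne']
  have hS1 : (‖y‖ ^ 2) ^ (-β) = (‖y‖ ^ 2) ^ (-β - 1) * ‖y‖ ^ 2 := by
    rw [← Real.rpow_add_one hS.ne', sub_add_cancel]
  rw [hpow, pd_const_mul, pd_norm_sq_rpow i _ hy, hA1, hS1]
  ring

theorem hasDerivAt_mul_sub_div_rpow (C T β : ℝ) {S t : ℝ} (hS : 0 < S) (ht : t < T) :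
    HasDerivAt (fun s => C * ((T - s) / S) ^ β) (-(β * C * (T - t) ^ (β - 1) * S ^ (-β))) t := by
  have hτ : 0 < T - t := sub_pos.2 ht
  have h := (((hasDerivAt_id' t).const_sub T).div_const S).rpow_const (p := β)
    (Or.inl (div_pos hτ hS).ne') |>.const_mul C
  refine h.congr_deriv ?_
  rw [Real.div_rpow hτ.le hS.le, Real.rpow_neg hS.le, Real.rpow_sub_one hS.ne']
  field_simp

theorem rpow_mul_mul_rpow_one_sub {C τ : ℝ} (hC : 0 < C) (hτ : 0 < τ) (hβα : β * α = 1) :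
    C ^ α * (C * τ ^ β) ^ (1 - α) = C * τ ^ (β - 1) := by
  rw [Real.mul_rpow hC.le (by positivity), ← Real.rpow_mul hτ.le, ← mul_assoc,
    ← Real.rpow_add hC, add_sub_cancel, Real.rpow_one, mul_one_sub, hβα]

end Profile

theorem fde_selfsimilar_exact_solution_general (n : ℕ) (α : ℝ)
    (hα : 2 / (n : ℝ) < α ∧ α ≤ 1) (T : ℝ) (Cα : ℝ) (hCpos : 0 < Cα)
    (hCα : Cα ^ α = 2 * (n : ℝ) ^ (α - 1) * ((n : ℝ) - 2 / α))
    (ρ : EuclideanSpace ℝ (Fin n) → ℝ → ℝ)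
    (hρ : ∀ x t, ρ x t = Cα * ((T - t) / ‖x‖ ^ 2) ^ (1 / α)) :
    ∀ (x : EuclideanSpace ℝ (Fin n)) (t : ℝ), x ≠ 0 → t < T →
      deriv (ρ x) t =
        ∑ i, pd i (fun y =>
          (n : ℝ) ^ (α - 1) * (ρ y t) ^ (-α) * pd i (fun z => ρ z t) y) x := by
  intro x t hx ht
  have hα0 : α ≠ 0 := (lt_of_le_of_lt (by positivity) hα.1).ne'
  have hβα : 1 / α * α = 1 := one_div_mul_cancel hα0
  have hτ : 0 < T - t := sub_pos.2 ht
  set A := Cα * (T - t) ^ (1 / α)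
  -- also at `z = 0`, where both sides vanish since `(T - t) / 0 = 0` and `0 ^ (-(1 / α)) = 0`
  have hprofile : ∀ z, ρ z t = A * (‖z‖ ^ 2) ^ (-(1 / α)) := fun z => by
    rw [hρ, Real.div_rpow hτ.le (by positivity), Real.rpow_neg (by positivity), div_eq_mul_inv,
      mul_assoc]
  have hflux (i : Fin n) : (fun y => (n : ℝ) ^ (α - 1) * ρ y t ^ (-α) * pd i (fun z => ρ z t) y)
      =ᶠ[𝓝 x] fun y => (n : ℝ) ^ (α - 1) * -(2 * (1 / α) * A ^ (1 - α))
        * ((‖y‖ ^ 2) ^ (-(1 / α)) * y i) := by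
    filter_upwards [eventually_ne_nhds hx] with y hy
    simp only [hprofile]
    rw [mul_assoc, rpow_neg_mul_pd_mul_norm_sq_rpow i (by positivity) hβα hy]
    ring
  rw [funext (hρ x), (hasDerivAt_mul_sub_div_rpow Cα T (1 / α) (by positivity) ht).deriv]
  simp only [fun i => (hflux i).pd_eq, pd_const_mul, ← Finset.mul_sum,
    sum_pd_norm_sq_rpow_mul_apply _ hx]
  have hamplitude := rpow_mul_mul_rpow_one_sub hCpos hτ hβα
  rw [hCα] at hamplitude
  linear_combination (1 / α * (‖x‖ ^ 2) ^ (-(1 / α))) * hamplitude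

/-- For `n ≥ 3`, `α ∈ (2/n, 1]` and `C_α^α = 2 n^{α−1}(n − 2/α)`, the profile
`ρ(x,t) = C_α ((T−t)/|x|²)^{1/α}` solves the fast diffusion equation
`∂_t ρ = ∑_i ∂_{x_i}( n^{α−1} ρ^{−α} ∂_{x_i} ρ )` at every `(x,t)` with
`x ≠ 0` and `t < T`. -/
theorem fde_selfsimilar_exact_solution (n : ℕ) (hn : 3 ≤ n) (α : ℝ)
    (hα : 2 / (n : ℝ) < α ∧ α ≤ 1) (T : ℝ) (Cα : ℝ) (hCpos : 0 < Cα)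
    (hCα : Cα ^ α = 2 * (n : ℝ) ^ (α - 1) * ((n : ℝ) - 2 / α))
    (ρ : EuclideanSpace ℝ (Fin n) → ℝ → ℝ)
    (hρ : ∀ x t, ρ x t = Cα * ((T - t) / ‖x‖ ^ 2) ^ (1 / α)) :
    ∀ (x : EuclideanSpace ℝ (Fin n)) (t : ℝ), x ≠ 0 → t < T →
      deriv (ρ x) t =
        ∑ i, pd i (fun y =>
          (n : ℝ) ^ (α - 1) * (ρ y t) ^ (-α) * pd i (fun z => ρ z t) y) x :=
  fde_selfsimilar_exact_solution_general n α hα T Cα hCpos hCα ρ hρ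
end

section
/- Let n ≥ 3, α ∈ (2/n, 1], R > 0, T > 0, and c a constant with c − 1 > (2/α)·1/(n − 2/α). Let Ψ(x,t) = C_α ((T − ct)/(|x|² + R²))^{1/α} with C_α^α = 2 n^{α−1}(n − 2/α), and let A_i (1 ≤ i ≤ 2n) and B_i (with B_{i+n} = B_i) be the associated first and second order correction coefficients: A_i = −(n/Ψ)^α D_{v_i}Ψ and B_i = (n/Ψ)^α ∂_{x_i}((n/Ψ)^α ∂_{x_i}Ψ) − (α/(2Ψ))((n/Ψ)^α ∂_{x_i}Ψ)² for 1 ≤ i ≤ n. Then there exists a constant c₀ > 0 depending only on n, α, c such that for all x ∈ ℝⁿ, 0 ≤ t < T/c, and all i: |A_i| ≤ c₀ (Ψ/(T−ct)) (|x|²+R²)^{1/2}, |∂_t A_i| ≤ c₀ (Ψ/(T−ct)²) (|x|²+R²)^{1/2}, |B_i| ≤ c₀ (Ψ/(T−ct)²) (|x|²+R²), |D_{v_i} B_i| ≤ c₀ (Ψ/(T−ct)²) (|x|²+R²)^{1/2}, |∂_t B_i| ≤ c₀ (Ψ/(T−ct)³) (|x|²+R²), |Ψ^α A_i| ≤ c₀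 Ψ (|x|²+R²)^{−1/2}, and |Ψ^α B_i| ≤ c₀ Ψ/(T−ct). -/
open Real Filter Topology

section Elementary

variable {u w : ℝ}

theorem abs_le_rpow_half_of_sq_le (h : u ^ 2 ≤ w) : |u| ≤ w ^ (1 / 2 : ℝ) :=
  sqrt_eq_rpow w ▸ abs_le_sqrt h

theorem abs_mul_sq_sub_le_of_sq_le (p : ℝ) (h : u ^ 2 ≤ w) :
    |p * u ^ 2 - w| ≤ (|p| + 1) * w := by
  have hw : 0 ≤ w := (sq_nonneg u).trans h
  calc |p * u ^ 2 - w| ≤ |p| * u ^ 2 + w := by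
        have := abs_sub (p * u ^ 2) w
        rwa [abs_mul, abs_of_nonneg (sq_nonneg u), abs_of_nonneg hw] at this
    _ ≤ (|p| + 1) * w := by nlinarith [abs_nonneg p]

theorem abs_div_le_rpow_neg_half_of_sq_le (h : u ^ 2 ≤ w) (hw : 0 < w) :
    |u / w| ≤ w ^ (-(1 : ℝ) / 2) := by
  rw [abs_div, abs_of_pos hw, show (-(1 : ℝ) / 2) = 1 / 2 - 1 by norm_num, rpow_sub_one hw.ne']
  exact div_le_div_of_nonneg_right (abs_le_rpow_half_of_sq_le h) hw.le

theorem abs_mul_sub_mul_pow_three_div_le_of_sq_le (p r : ℝ) (h : u ^ 2 ≤ w) (hw : 0 < w) :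
    |p * u - r * (u ^ 3 / w)| ≤ (|p| + |r|) * w ^ (1 / 2 : ℝ) := by
  have hu := abs_le_rpow_half_of_sq_le h
  have hu3 : |u ^ 3 / w| ≤ |u| := by
    rw [abs_div, abs_of_pos hw, div_le_iff₀ hw, pow_succ', abs_mul, abs_pow, sq_abs]
    exact mul_le_mul_of_nonneg_left h (abs_nonneg u)
  calc |p * u - r * (u ^ 3 / w)| ≤ |p| * |u| + |r| * |u ^ 3 / w| := by
        have := abs_sub (p * u) (r * (u ^ 3 / w))
        rwa [abs_mul, abs_mul] at this
    _ ≤ |p| * |u| + |r| * |u| := by gcongr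
    _ ≤ (|p| + |r|) * w ^ (1 / 2 : ℝ) := by rw [add_mul]; gcongr

theorem abs_mul_mul_le_of_abs_le {k P v K S : ℝ} (hP : 0 ≤ P) (hv : |v| ≤ K * S) :
    |k * P * v| ≤ |k| * K * P * S := by
  rw [abs_mul, abs_mul, abs_of_nonneg hP]
  nlinarith [mul_le_mul_of_nonneg_left hv (mul_nonneg (abs_nonneg k) hP)]

end Elementary

theorem sq_apply_le_norm_sq_add_sq {n : ℕ} (x : EuclideanSpace ℝ (Fin n)) (i : Fin n) (R : ℝ) :
    x i ^ 2 ≤ ‖x‖ ^ 2 + R ^ 2 := by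
  have h := pow_le_pow_left₀ (norm_nonneg _) (PiLp.norm_apply_le x i) 2
  rw [Real.norm_eq_abs, sq_abs] at h
  linarith [sq_nonneg R]

theorem sub_mul_pos_of_lt_div {T c t : ℝ} (hT : 0 < T) (ht : 0 ≤ t) (htc : t < T / c) :
    0 < T - c * t := by
  have hc : 0 < c := by
    by_contra hc
    exact (ht.trans_lt htc).not_ge (div_nonpos_of_nonneg_of_nonpos hT.le (not_lt.1 hc))
  linarith [(lt_div_iff₀ hc).1 htc]

noncomputable def barrier {n : ℕ} (β c T R C : ℝ) (x : EuclideanSpace ℝ (Fin n)) (s : ℝ) : ℝ :=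
  C * ((T - c * s) / (‖x‖ ^ 2 + R ^ 2)) ^ β

section Barrier

variable {n : ℕ} {β c T R C s t : ℝ} {y : EuclideanSpace ℝ (Fin n)}

local notation "Ψ" => barrier β c T R C

theorem barrier_pos (hC : 0 < C) (hR : R ≠ 0) (hτ : 0 < T - c * s) : 0 < Ψ y s :=
  mul_pos hC (rpow_pos_of_pos (div_pos hτ (by positivity)) β)

theorem barrier_rpow {α : ℝ} (hβ : β * α = 1) (hC : 0 ≤ C) (hτ : 0 ≤ T - c * s) :
    Ψ y s ^ α = C ^ α * ((T - c * s) / (‖y‖ ^ 2 + R ^ 2)) := by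
  have hq : 0 ≤ (T - c * s) / (‖y‖ ^ 2 + R ^ 2) := by positivity
  unfold barrier
  rw [mul_rpow hC (rpow_nonneg hq β), ← rpow_mul hq, hβ, rpow_one]

theorem hasDerivAt_barrier (hR : R ≠ 0) (hτ : 0 < T - c * t) :
    HasDerivAt (fun s => Ψ y s) (-(c * β) * Ψ y t / (T - c * t)) t := by
  have hρ : 0 < ‖y‖ ^ 2 + R ^ 2 := by positivity
  have hq : 0 < (T - c * t) / (‖y‖ ^ 2 + R ^ 2) := div_pos hτ hρ
  have h : HasDerivAt (fun s => (T - c * s) / (‖y‖ ^ 2 + R ^ 2)) (-c / (‖y‖ ^ 2 + R ^ 2)) t := by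
    simpa using (((hasDerivAt_id' t).const_mul c).const_sub T).div_const (‖y‖ ^ 2 + R ^ 2)
  refine ((h.rpow_const (p := β) (Or.inl hq.ne')).const_mul C).congr_deriv ?_
  rw [barrier, rpow_sub_one hq.ne']
  field_simp

theorem hasFDerivAt_barrier (hR : R ≠ 0) (hτ : 0 < T - c * s) :
    HasFDerivAt (fun z => Ψ z s) ((-(2 * β) * Ψ y s / (‖y‖ ^ 2 + R ^ 2)) • innerSL ℝ y) y := by
  have hρ : 0 < ‖y‖ ^ 2 + R ^ 2 := by positivity
  have hq : 0 < (T - c * s) / (‖y‖ ^ 2 + R ^ 2) := div_pos hτ hρ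
  have hρ' := (hasStrictFDerivAt_norm_sq y).hasFDerivAt.add_const (R ^ 2)
  have hg := (((hasDerivAt_const (‖y‖ ^ 2 + R ^ 2) (T - c * s)).fun_div
    (hasDerivAt_id' _) hρ.ne').rpow_const (p := β) (Or.inl hq.ne')).const_mul C
  refine (hg.comp_hasFDerivAt y hρ').congr_fderiv ?_
  rw [two_smul, ← two_smul ℝ, smul_smul, barrier, rpow_sub_one hq.ne']
  congr 1
  field_simp
  ring

theorem pd_barrier_mul (i : Fin n) {f : EuclideanSpace ℝ (Fin n) → ℝ}
    {f' : EuclideanSpace ℝ (Fin n) →L[ℝ] ℝ} (hf : HasFDerivAt f f' y)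
    (hR : R ≠ 0) (hτ : 0 < T - c * s) :
    pd i (fun z => Ψ z s * f z) y
      = Ψ y s * (f' (EuclideanSpace.single i 1) - 2 * β * y i * f y / (‖y‖ ^ 2 + R ^ 2)) := by
  have h : HasFDerivAt (fun z => Ψ z s * f z) _ y := (hasFDerivAt_barrier hR hτ).mul hf
  rw [pd, h.fderiv]
  simp only [neg_mul, add_apply, smul_apply, smul_eq_mul, coe_innerSL_apply,
    EuclideanSpace.inner_single_right, ringHom_apply, one_mul]
  ring

theorem hasDerivAt_barrier_div_pow (k : ℕ) (hR : R ≠ 0) (hτ : 0 < T - c * t) :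
    HasDerivAt (fun s => Ψ y s / (T - c * s) ^ k)
      (-(c * (β - k)) * (Ψ y t / (T - c * t) ^ (k + 1))) t := by
  have hτ' : HasDerivAt (fun s => T - c * s) (-c) t := by
    simpa using ((hasDerivAt_id' t).const_mul c).const_sub T
  have hτk : HasDerivAt (fun s => (T - c * s) ^ k) (k * (T - c * t) ^ (k - 1) * -c) t :=
    hτ'.pow k
  refine ((hasDerivAt_barrier hR hτ).div hτk (pow_ne_zero k hτ.ne')).congr_deriv ?_
  rcases k with _ | k
  · simp only [CharP.cast_eq_zero, zero_tsub, pow_zero, mul_zero, zero_mul, sub_zero,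
      zero_add, pow_one]
    ring
  · simp only [Nat.add_sub_cancel]
    field_simp
    push_cast
    ring

theorem eventually_sub_mul_pos (hτ : 0 < T - c * t) : ∀ᶠ s in 𝓝 t, 0 < T - c * s :=
  ((continuous_const.sub (continuous_const_mul c)).tendsto t).eventually (lt_mem_nhds hτ)

end Barrier

noncomputable def weightedPartial (n : ℕ) (α : ℝ) (Ψ : EuclideanSpace ℝ (Fin n) → ℝ → ℝ)
    (i : Fin n) (x : EuclideanSpace ℝ (Fin n)) (s : ℝ) : ℝ :=
  ((n : ℝ) / Ψ x s) ^ α * pd i (fun z => Ψ z s) x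

noncomputable def corrA (n : ℕ) (α : ℝ) (Ψ : EuclideanSpace ℝ (Fin n) → ℝ → ℝ)
    (i : Fin n) (x : EuclideanSpace ℝ (Fin n)) (s : ℝ) : ℝ :=
  -weightedPartial n α Ψ i x s

noncomputable def corrB (n : ℕ) (α : ℝ) (Ψ : EuclideanSpace ℝ (Fin n) → ℝ → ℝ)
    (i : Fin n) (x : EuclideanSpace ℝ (Fin n)) (s : ℝ) : ℝ :=
  ((n : ℝ) / Ψ x s) ^ α * pd i (fun y => weightedPartial n α Ψ i y s) x -
    α / (2 * Ψ x s) * weightedPartial n α Ψ i x s ^ 2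

section Coefficients

variable {n : ℕ} {α β c T R C κ s t : ℝ} {y : EuclideanSpace ℝ (Fin n)} (i : Fin n)

local notation "Ψ" => barrier β c T R C

theorem div_barrier_rpow (hβ : β * α = 1) (hC : 0 < C) (hR : R ≠ 0)
    (hκ : (n : ℝ) ^ α / C ^ α = κ) (hτ : 0 < T - c * s) :
    ((n : ℝ) / Ψ y s) ^ α = κ * ((‖y‖ ^ 2 + R ^ 2) / (T - c * s)) := by
  have hρ : 0 < ‖y‖ ^ 2 + R ^ 2 := by positivity
  rw [div_rpow n.cast_nonneg (barrier_pos hC hR hτ).le, barrier_rpow hβ hC.le hτ.le, ← hκ]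
  field_simp

theorem weightedPartial_barrier (hβ : β * α = 1) (hC : 0 < C) (hR : R ≠ 0)
    (hκ : (n : ℝ) ^ α / C ^ α = κ) (hτ : 0 < T - c * s) :
    weightedPartial n α Ψ i y s = Ψ y s * (-(2 * β * κ / (T - c * s)) * y i) := by
  have hρ : 0 < ‖y‖ ^ 2 + R ^ 2 := by positivity
  rw [weightedPartial, div_barrier_rpow hβ hC hR hκ hτ, pd, (hasFDerivAt_barrier hR hτ).fderiv]
  simp only [smul_apply, coe_innerSL_apply, EuclideanSpace.inner_single_right, ringHom_apply,
    one_mul, smul_eq_mul]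
  field_simp

theorem corrA_barrier (hβ : β * α = 1) (hC : 0 < C) (hR : R ≠ 0)
    (hκ : (n : ℝ) ^ α / C ^ α = κ) (hτ : 0 < T - c * s) :
    corrA n α Ψ i y s = 2 * β * κ * (Ψ y s / (T - c * s)) * y i := by
  rw [corrA, weightedPartial_barrier i hβ hC hR hκ hτ]
  ring

theorem corrB_barrier (hβ : β * α = 1) (hC : 0 < C) (hR : R ≠ 0)
    (hκ : (n : ℝ) ^ α / C ^ α = κ) (hτ : 0 < T - c * s) :
    corrB n α Ψ i y s
      = 2 * β * κ ^ 2 * (Ψ y s / (T - c * s) ^ 2) *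
          ((2 * β - 1) * y i ^ 2 - (‖y‖ ^ 2 + R ^ 2)) := by
  have hρ : 0 < ‖y‖ ^ 2 + R ^ 2 := by positivity
  have hf : HasFDerivAt (fun z : EuclideanSpace ℝ (Fin n) => -(2 * β * κ / (T - c * s)) * z i)
      _ y :=
    (PiLp.hasFDerivAt_apply (𝕜 := ℝ) 2 y i).const_mul _
  simp only [corrB, weightedPartial_barrier i hβ hC hR hκ hτ]
  rw [pd_barrier_mul i hf hR hτ, div_barrier_rpow hβ hC hR hκ hτ]
  have hΨ := barrier_pos (β := β) (y := y) hC hR hτ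
  simp only [neg_smul, neg_apply, smul_apply, PiLp.proj_apply, PiLp.single_eq_same, smul_eq_mul,
    mul_one]
  field_simp
  linear_combination -(κ ^ 2 * β * y i ^ 2) * hβ

theorem pd_corrB_barrier (hβ : β * α = 1) (hC : 0 < C) (hR : R ≠ 0)
    (hκ : (n : ℝ) ^ α / C ^ α = κ) (hτ : 0 < T - c * t) :
    pd i (fun z => corrB n α Ψ i z t) y
      = 2 * β * κ ^ 2 * (Ψ y t / (T - c * t) ^ 2) *
          ((6 * β - 4) * y i - 2 * β * (2 * β - 1) * (y i ^ 3 / (‖y‖ ^ 2 + R ^ 2))) := by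
  have hρ : 0 < ‖y‖ ^ 2 + R ^ 2 := by positivity
  have hB : (fun z => corrB n α Ψ i z t) = fun z => Ψ z t *
      (2 * β * κ ^ 2 / (T - c * t) ^ 2 * ((2 * β - 1) * z i ^ 2 - (‖z‖ ^ 2 + R ^ 2))) := by
    funext z
    rw [corrB_barrier i hβ hC hR hκ hτ]
    ring
  have hf : HasFDerivAt (fun z : EuclideanSpace ℝ (Fin n) =>
      2 * β * κ ^ 2 / (T - c * t) ^ 2 * ((2 * β - 1) * z i ^ 2 - (‖z‖ ^ 2 + R ^ 2))) _ y :=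
    ((((PiLp.hasFDerivAt_apply (𝕜 := ℝ) 2 y i).pow 2).const_mul _).sub
      ((hasStrictFDerivAt_norm_sq y).hasFDerivAt.add_const _)).const_mul _
  rw [hB, pd_barrier_mul i hf hR hτ]
  simp only [Nat.add_one_sub_one, pow_one, nsmul_eq_mul, Nat.cast_ofNat, smul_apply, sub_apply,
    PiLp.proj_apply, PiLp.single_eq_same, smul_eq_mul, mul_one, coe_innerSL_apply,
    EuclideanSpace.inner_single_right, ringHom_apply, one_mul]
  field_simp
  ring

theorem hasDerivAt_corrA_barrier (hβ : β * α = 1) (hC : 0 < C) (hR : R ≠ 0)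
    (hκ : (n : ℝ) ^ α / C ^ α = κ) (hτ : 0 < T - c * t) :
    HasDerivAt (fun s => corrA n α Ψ i y s)
      (-(2 * β * κ * c * (β - 1)) * (Ψ y t / (T - c * t) ^ 2) * y i) t := by
  have h := ((hasDerivAt_barrier_div_pow (β := β) (C := C) (y := y) 1 hR hτ).const_mul
    (2 * β * κ)).mul_const (y i)
  refine (h.congr_of_eventuallyEq ?_).congr_deriv ?_
  · filter_upwards [eventually_sub_mul_pos hτ] with s hs
    rw [corrA_barrier i hβ hC hR hκ hs, pow_one]
  · push_cast
    ring

theorem hasDerivAt_corrB_barrier (hβ : β * α = 1) (hC : 0 < C) (hR : R ≠ 0)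
    (hκ : (n : ℝ) ^ α / C ^ α = κ) (hτ : 0 < T - c * t) :
    HasDerivAt (fun s => corrB n α Ψ i y s)
      (-(2 * β * κ ^ 2 * c * (β - 2)) * (Ψ y t / (T - c * t) ^ 3) *
        ((2 * β - 1) * y i ^ 2 - (‖y‖ ^ 2 + R ^ 2))) t := by
  have h := ((hasDerivAt_barrier_div_pow (β := β) (C := C) (y := y) 2 hR hτ).const_mul
    (2 * β * κ ^ 2)).mul_const ((2 * β - 1) * y i ^ 2 - (‖y‖ ^ 2 + R ^ 2))
  refine (h.congr_of_eventuallyEq ?_).congr_deriv ?_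
  · filter_upwards [eventually_sub_mul_pos hτ] with s hs
    rw [corrB_barrier i hβ hC hR hκ hs]
  · push_cast
    ring

theorem barrier_rpow_mul_corrA (hβ : β * α = 1) (hC : 0 < C) (hR : R ≠ 0)
    (hκ : (n : ℝ) ^ α / C ^ α = κ) (hτ : 0 < T - c * s) :
    Ψ y s ^ α * corrA n α Ψ i y s = 2 * β * (n : ℝ) ^ α * Ψ y s * (y i / (‖y‖ ^ 2 + R ^ 2)) := by
  have hρ : 0 < ‖y‖ ^ 2 + R ^ 2 := by positivity
  have hCα : 0 < C ^ α := rpow_pos_of_pos hC α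
  rw [barrier_rpow hβ hC.le hτ.le, corrA_barrier i hβ hC hR hκ hτ, ← hκ]
  field_simp

theorem barrier_rpow_mul_corrB (hβ : β * α = 1) (hC : 0 < C) (hR : R ≠ 0)
    (hκ : (n : ℝ) ^ α / C ^ α = κ) (hτ : 0 < T - c * s) :
    Ψ y s ^ α * corrB n α Ψ i y s = 2 * β * κ * (n : ℝ) ^ α * (Ψ y s / (T - c * s)) *
      (((2 * β - 1) * y i ^ 2 - (‖y‖ ^ 2 + R ^ 2)) / (‖y‖ ^ 2 + R ^ 2)) := by
  have hρ : 0 < ‖y‖ ^ 2 + R ^ 2 := by positivity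
  have hCα : 0 < C ^ α := rpow_pos_of_pos hC α
  rw [barrier_rpow hβ hC.le hτ.le, corrB_barrier i hβ hC hR hκ hτ, ← hκ]
  field_simp

theorem abs_corrA_barrier_le (hβ : β * α = 1) (hC : 0 < C) (hR : R ≠ 0)
    (hκ : (n : ℝ) ^ α / C ^ α = κ) (hτ : 0 < T - c * t) :
    |corrA n α Ψ i y t|
      ≤ |2 * β * κ| * (Ψ y t / (T - c * t)) * (‖y‖ ^ 2 + R ^ 2) ^ (1 / 2 : ℝ) := by
  have hP : 0 ≤ Ψ y t / (T - c * t) := div_nonneg (barrier_pos hC hR hτ).le hτ.le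
  rw [corrA_barrier i hβ hC hR hκ hτ]
  simpa only [one_mul, mul_one] using abs_mul_mul_le_of_abs_le (k := 2 * β * κ) (K := 1) hP
    (by simpa only [one_mul] using abs_le_rpow_half_of_sq_le (sq_apply_le_norm_sq_add_sq y i R))

theorem abs_deriv_corrA_barrier_le (hβ : β * α = 1) (hC : 0 < C) (hR : R ≠ 0)
    (hκ : (n : ℝ) ^ α / C ^ α = κ) (hτ : 0 < T - c * t) :
    |deriv (fun s => corrA n α Ψ i y s) t|
      ≤ |2 * β * κ * c * (β - 1)| * (Ψ y t / (T - c * t) ^ 2) *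
          (‖y‖ ^ 2 + R ^ 2) ^ (1 / 2 : ℝ) := by
  have hP : 0 ≤ Ψ y t / (T - c * t) ^ 2 := div_nonneg (barrier_pos hC hR hτ).le (by positivity)
  rw [(hasDerivAt_corrA_barrier i hβ hC hR hκ hτ).deriv, ← abs_neg (2 * β * κ * c * (β - 1))]
  simpa only [one_mul, mul_one] using abs_mul_mul_le_of_abs_le (K := 1) hP
    (by simpa only [one_mul] using abs_le_rpow_half_of_sq_le (sq_apply_le_norm_sq_add_sq y i R))

theorem abs_corrB_barrier_le (hβ : β * α = 1) (hC : 0 < C) (hR : R ≠ 0)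
    (hκ : (n : ℝ) ^ α / C ^ α = κ) (hτ : 0 < T - c * t) :
    |corrB n α Ψ i y t|
      ≤ |2 * β * κ ^ 2| * (|2 * β - 1| + 1) * (Ψ y t / (T - c * t) ^ 2) * (‖y‖ ^ 2 + R ^ 2) := by
  have hP : 0 ≤ Ψ y t / (T - c * t) ^ 2 := div_nonneg (barrier_pos hC hR hτ).le (by positivity)
  rw [corrB_barrier i hβ hC hR hκ hτ]
  exact abs_mul_mul_le_of_abs_le hP
    (abs_mul_sq_sub_le_of_sq_le _ (sq_apply_le_norm_sq_add_sq y i R))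

theorem abs_pd_corrB_barrier_le (hβ : β * α = 1) (hC : 0 < C) (hR : R ≠ 0)
    (hκ : (n : ℝ) ^ α / C ^ α = κ) (hτ : 0 < T - c * t) :
    |pd i (fun z => corrB n α Ψ i z t) y|
      ≤ |2 * β * κ ^ 2| * (|6 * β - 4| + |2 * β * (2 * β - 1)|) * (Ψ y t / (T - c * t) ^ 2) *
          (‖y‖ ^ 2 + R ^ 2) ^ (1 / 2 : ℝ) := by
  have hP : 0 ≤ Ψ y t / (T - c * t) ^ 2 := div_nonneg (barrier_pos hC hR hτ).le (by positivity)
  rw [pd_corrB_barrier i hβ hC hR hκ hτ]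
  exact abs_mul_mul_le_of_abs_le hP (abs_mul_sub_mul_pow_three_div_le_of_sq_le _ _
    (sq_apply_le_norm_sq_add_sq y i R) (by positivity))

theorem abs_deriv_corrB_barrier_le (hβ : β * α = 1) (hC : 0 < C) (hR : R ≠ 0)
    (hκ : (n : ℝ) ^ α / C ^ α = κ) (hτ : 0 < T - c * t) :
    |deriv (fun s => corrB n α Ψ i y s) t|
      ≤ |2 * β * κ ^ 2 * c * (β - 2)| * (|2 * β - 1| + 1) * (Ψ y t / (T - c * t) ^ 3) *
          (‖y‖ ^ 2 + R ^ 2) := by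
  have hP : 0 ≤ Ψ y t / (T - c * t) ^ 3 := div_nonneg (barrier_pos hC hR hτ).le (by positivity)
  rw [(hasDerivAt_corrB_barrier i hβ hC hR hκ hτ).deriv, ← abs_neg (2 * β * κ ^ 2 * c * (β - 2))]
  exact abs_mul_mul_le_of_abs_le hP
    (abs_mul_sq_sub_le_of_sq_le _ (sq_apply_le_norm_sq_add_sq y i R))

theorem abs_barrier_rpow_mul_corrA_le (hβ : β * α = 1) (hC : 0 < C) (hR : R ≠ 0)
    (hκ : (n : ℝ) ^ α / C ^ α = κ) (hτ : 0 < T - c * t) :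
    |Ψ y t ^ α * corrA n α Ψ i y t|
      ≤ |2 * β * (n : ℝ) ^ α| * Ψ y t * (‖y‖ ^ 2 + R ^ 2) ^ (-(1 : ℝ) / 2) := by
  rw [barrier_rpow_mul_corrA i hβ hC hR hκ hτ]
  simpa only [one_mul, mul_one] using abs_mul_mul_le_of_abs_le (K := 1)
    (barrier_pos hC hR hτ).le (by simpa only [one_mul] using
      abs_div_le_rpow_neg_half_of_sq_le (sq_apply_le_norm_sq_add_sq y i R) (by positivity))

theorem abs_barrier_rpow_mul_corrB_le (hβ : β * α = 1) (hC : 0 < C) (hR : R ≠ 0)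
    (hκ : (n : ℝ) ^ α / C ^ α = κ) (hτ : 0 < T - c * t) :
    |Ψ y t ^ α * corrB n α Ψ i y t|
      ≤ |2 * β * κ * (n : ℝ) ^ α| * (|2 * β - 1| + 1) * Ψ y t / (T - c * t) := by
  have hρ : 0 < ‖y‖ ^ 2 + R ^ 2 := by positivity
  have hP : 0 ≤ Ψ y t / (T - c * t) := div_nonneg (barrier_pos hC hR hτ).le hτ.le
  have hv : |((2 * β - 1) * y i ^ 2 - (‖y‖ ^ 2 + R ^ 2)) / (‖y‖ ^ 2 + R ^ 2)|
      ≤ (|2 * β - 1| + 1) * 1 := by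
    rw [abs_div, abs_of_pos hρ, div_le_iff₀ hρ, mul_one]
    exact abs_mul_sq_sub_le_of_sq_le _ (sq_apply_le_norm_sq_add_sq y i R)
  rw [barrier_rpow_mul_corrB i hβ hC hR hκ hτ]
  exact (abs_mul_mul_le_of_abs_le hP hv).trans_eq (by ring)

end Coefficients

theorem correction_coefficients_bounds_general (n : ℕ) (α c : ℝ)
    (hα : 2 / (n : ℝ) < α ∧ α ≤ 1) :
    ∃ c₀ > (0 : ℝ), ∀ (R T Cα : ℝ), 0 < R → 0 < T → 0 < Cα →
      Cα ^ α = 2 * (n : ℝ) ^ (α - 1) * ((n : ℝ) - 2 / α) →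
      ∀ Ψ : EuclideanSpace ℝ (Fin n) → ℝ → ℝ,
      (∀ x s, Ψ x s = Cα * ((T - c * s) / (‖x‖ ^ 2 + R ^ 2)) ^ (1 / α)) →
      ∀ A B : Fin n → EuclideanSpace ℝ (Fin n) → ℝ → ℝ,
      (∀ (i : Fin n) x s,
        A i x s = -(((n : ℝ) / Ψ x s) ^ α) * pd i (fun z => Ψ z s) x) →
      (∀ (i : Fin n) x s,
        B i x s = ((n : ℝ) / Ψ x s) ^ α *
            pd i (fun y => ((n : ℝ) / Ψ y s) ^ α * pd i (fun z => Ψ z s) y) x -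
          (α / (2 * Ψ x s)) *
            (((n : ℝ) / Ψ x s) ^ α * pd i (fun z => Ψ z s) x) ^ 2) →
      ∀ (x : EuclideanSpace ℝ (Fin n)) (t : ℝ) (i : Fin n), 0 ≤ t → t < T / c →
        |A i x t| ≤ c₀ * (Ψ x t / (T - c * t)) * (‖x‖ ^ 2 + R ^ 2) ^ ((1 : ℝ) / 2) ∧
        |deriv (fun s => A i x s) t| ≤
          c₀ * (Ψ x t / (T - c * t) ^ 2) * (‖x‖ ^ 2 + R ^ 2) ^ ((1 : ℝ) / 2) ∧
        |B i x t| ≤ c₀ * (Ψ x t / (T - c * t) ^ 2) * (‖x‖ ^ 2 + R ^ 2) ∧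
        |pd i (fun y => B i y t) x| ≤
          c₀ * (Ψ x t / (T - c * t) ^ 2) * (‖x‖ ^ 2 + R ^ 2) ^ ((1 : ℝ) / 2) ∧
        |deriv (fun s => B i x s) t| ≤
          c₀ * (Ψ x t / (T - c * t) ^ 3) * (‖x‖ ^ 2 + R ^ 2) ∧
        |(Ψ x t) ^ α * A i x t| ≤ c₀ * Ψ x t * (‖x‖ ^ 2 + R ^ 2) ^ (-(1 : ℝ) / 2) ∧
        |(Ψ x t) ^ α * B i x t| ≤ c₀ * Ψ x t / (T - c * t) := by
  have hα₀ : 0 < α := (div_nonneg zero_le_two n.cast_nonneg).trans_lt hα.1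
  have hβ : 1 / α * α = 1 := one_div_mul_cancel hα₀.ne'
  set β := 1 / α
  set κ := (n : ℝ) ^ α / (2 * (n : ℝ) ^ (α - 1) * ((n : ℝ) - 2 / α))
  refine ⟨1 + |2 * β * κ| + |2 * β * κ * c * (β - 1)| + |2 * β * κ ^ 2| * (|2 * β - 1| + 1) +
    |2 * β * κ ^ 2| * (|6 * β - 4| + |2 * β * (2 * β - 1)|) +
    |2 * β * κ ^ 2 * c * (β - 2)| * (|2 * β - 1| + 1) + |2 * β * (n : ℝ) ^ α| +
    |2 * β * κ * (n : ℝ) ^ α| * (|2 * β - 1| + 1), by positivity, ?_⟩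
  intro R T C hR hT hC hM Ψ hΨ A B hA hB x t i ht₀ ht
  obtain rfl : Ψ = barrier β c T R C := funext fun x => funext (hΨ x)
  obtain rfl : A = corrA n α (barrier β c T R C) :=
    funext fun i => funext fun x => funext fun s => (hA i x s).trans (neg_mul _ _)
  obtain rfl : B = corrB n α (barrier β c T R C) := funext fun i => funext fun x => funext (hB i x)
  have hκ : (n : ℝ) ^ α / C ^ α = κ := by rw [hM]
  have hτ := sub_mul_pos_of_lt_div hT ht₀ ht
  -- `hΨ₀` and `hτ` are what lets `gcongr` discharge its positivity side goals below.
  have hΨ₀ := barrier_pos (β := β) (y := x) hC hR.ne' hτ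
  refine ⟨(abs_corrA_barrier_le i hβ hC hR.ne' hκ hτ).trans ?_,
    (abs_deriv_corrA_barrier_le i hβ hC hR.ne' hκ hτ).trans ?_,
    (abs_corrB_barrier_le i hβ hC hR.ne' hκ hτ).trans ?_,
    (abs_pd_corrB_barrier_le i hβ hC hR.ne' hκ hτ).trans ?_,
    (abs_deriv_corrB_barrier_le i hβ hC hR.ne' hκ hτ).trans ?_,
    (abs_barrier_rpow_mul_corrA_le i hβ hC hR.ne' hκ hτ).trans ?_,
    (abs_barrier_rpow_mul_corrB_le i hβ hC hR.ne' hκ hτ).trans ?_⟩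
  all_goals
    gcongr
    exact sub_nonneg.1 (by ring_nf; positivity)

/-- Uniform bounds on the correction coefficients `A_i`, `B_i` of the barrier
`Ψ(x,t) = C_α ((T−ct)/(|x|²+R²))^{1/α}`: there is a constant `c₀ > 0`
depending only on `n, α, c` (in particular independent of `R`, `T`, `ε`) such
that on `0 ≤ t < T/c` the stated bounds on `|A_i|, |∂_t A_i|, |B_i|,
|D_{v_i}B_i|, |∂_t B_i|, |Ψ^α A_i|, |Ψ^α B_i|` hold.  (For `1 ≤ i ≤ n`;
the coefficients with index `i+n` are `A_{i+n} = −A_i`, `B_{i+n} = B_i`,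
whose bounds are the same in absolute value.) -/
theorem correction_coefficients_bounds (n : ℕ) (hn : 3 ≤ n) (α c : ℝ)
    (hα : 2 / (n : ℝ) < α ∧ α ≤ 1)
    (hc : c - 1 > (2 / α) * (1 / ((n : ℝ) - 2 / α))) :
    ∃ c₀ > (0 : ℝ), ∀ (R T Cα : ℝ), 0 < R → 0 < T → 0 < Cα →
      Cα ^ α = 2 * (n : ℝ) ^ (α - 1) * ((n : ℝ) - 2 / α) →
      ∀ Ψ : EuclideanSpace ℝ (Fin n) → ℝ → ℝ,
      (∀ x s, Ψ x s = Cα * ((T - c * s) / (‖x‖ ^ 2 + R ^ 2)) ^ (1 / α)) →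
      ∀ A B : Fin n → EuclideanSpace ℝ (Fin n) → ℝ → ℝ,
      (∀ (i : Fin n) x s,
        A i x s = -(((n : ℝ) / Ψ x s) ^ α) * pd i (fun z => Ψ z s) x) →
      (∀ (i : Fin n) x s,
        B i x s = ((n : ℝ) / Ψ x s) ^ α *
            pd i (fun y => ((n : ℝ) / Ψ y s) ^ α * pd i (fun z => Ψ z s) y) x -
          (α / (2 * Ψ x s)) *
            (((n : ℝ) / Ψ x s) ^ α * pd i (fun z => Ψ z s) x) ^ 2) →
      ∀ (x : EuclideanSpace ℝ (Fin n)) (t : ℝ) (i : Fin n), 0 ≤ t → t < T / c →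
        |A i x t| ≤ c₀ * (Ψ x t / (T - c * t)) * (‖x‖ ^ 2 + R ^ 2) ^ ((1 : ℝ) / 2) ∧
        |deriv (fun s => A i x s) t| ≤
          c₀ * (Ψ x t / (T - c * t) ^ 2) * (‖x‖ ^ 2 + R ^ 2) ^ ((1 : ℝ) / 2) ∧
        |B i x t| ≤ c₀ * (Ψ x t / (T - c * t) ^ 2) * (‖x‖ ^ 2 + R ^ 2) ∧
        |pd i (fun y => B i y t) x| ≤
          c₀ * (Ψ x t / (T - c * t) ^ 2) * (‖x‖ ^ 2 + R ^ 2) ^ ((1 : ℝ) / 2) ∧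
        |deriv (fun s => B i x s) t| ≤
          c₀ * (Ψ x t / (T - c * t) ^ 3) * (‖x‖ ^ 2 + R ^ 2) ∧
        |(Ψ x t) ^ α * A i x t| ≤ c₀ * Ψ x t * (‖x‖ ^ 2 + R ^ 2) ^ (-(1 : ℝ) / 2) ∧
        |(Ψ x t) ^ α * B i x t| ≤ c₀ * Ψ x t / (T - c * t) :=
  correction_coefficients_bounds_general n α c hα
end

section
/- Let n ≥ 2, α ∈ (0, 2/n), R > 0, T > 0, and define Ψ(x,t) = C_α ( T / (|x|² + R² (t+T)^{4/(2−nα)}) )^{1/α}, where C_α > 0 satisfies C_α^α = 2 n^{α−1} (2/α − n). Then for all x ∈ ℝⁿ and 0 < t < T one has the identity ∂_t Ψ − Σ_i ∂_{x_i}( n^{α−1} Ψ^{−α} ∂_{x_i} Ψ ) = −[ (2/(2−nα)) · R²(t+T)^{4/(2−nα)}/(|x|² + R²(t+T)^{4/(2−nα)}) · (T−t)/(T+t) + 1 ] · Ψ/(Tα), and consequently ∂_t Ψ − Σ_i ∂_{x_i}( n^{α−1} Ψ^{−α} ∂_{x_i} Ψ ) < −Ψ/(Tα) < 0. -/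
section Calculus

variable {n : ℕ}

theorem sum_pd_mul_apply (g : EuclideanSpace ℝ (Fin n) → ℝ) (x : EuclideanSpace ℝ (Fin n)) :
    ∑ i, pd i g x * x i = fderiv ℝ g x x := by
  have hx : ∑ i, x i • EuclideanSpace.single i (1 : ℝ) = x := by
    simpa using (EuclideanSpace.basisFun (Fin n) ℝ).sum_repr x
  calc ∑ i, pd i g x * x i = fderiv ℝ g x (∑ i, x i • EuclideanSpace.single i (1 : ℝ)) := by
        simp [pd, mul_comm]
    _ = fderiv ℝ g x x := by rw [hx]

theorem pd_mul_apply {g : EuclideanSpace ℝ (Fin n) → ℝ} {x : EuclideanSpace ℝ (Fin n)}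
    (hg : DifferentiableAt ℝ g x) (i : Fin n) :
    pd i (fun y => g y * y i) x = pd i g x * x i + g x := by
  have h := hg.hasFDerivAt.mul (EuclideanSpace.proj (𝕜 := ℝ) i).hasFDerivAt
  rw [pd, show (fun y => g y * y i) = g * ⇑(EuclideanSpace.proj i) from rfl, h.fderiv]
  simp [pd, mul_comm, add_comm]

theorem sum_pd_mul_coord {g : EuclideanSpace ℝ (Fin n) → ℝ} {x : EuclideanSpace ℝ (Fin n)}
    (hg : DifferentiableAt ℝ g x) :
    ∑ i, pd i (fun y => g y * y i) x = fderiv ℝ g x x + n * g x := by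
  simp [pd_mul_apply hg, Finset.sum_add_distrib, sum_pd_mul_apply]

theorem hasFDerivAt_comp_norm_sq_add {f : ℝ → ℝ} {f' E : ℝ} {y : EuclideanSpace ℝ (Fin n)}
    (hf : HasDerivAt f f' (‖y‖ ^ 2 + E)) :
    HasFDerivAt (fun z => f (‖z‖ ^ 2 + E)) ((2 * f') • innerSL ℝ y) y := by
  have h := hf.comp_hasFDerivAt y ((hasFDerivAt_id y).norm_sq.add_const E)
  refine h.congr_fderiv ?_
  ext v
  simp
  ring

theorem pd_comp_norm_sq_add {f : ℝ → ℝ} {f' E : ℝ} {y : EuclideanSpace ℝ (Fin n)}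
    (hf : HasDerivAt f f' (‖y‖ ^ 2 + E)) (i : Fin n) :
    pd i (fun z => f (‖z‖ ^ 2 + E)) y = 2 * f' * y i := by
  simp [pd, (hasFDerivAt_comp_norm_sq_add hf).fderiv, EuclideanSpace.inner_single_right]

theorem sum_pd_comp_norm_sq_add_mul_coord {f : ℝ → ℝ} {f' E : ℝ} {x : EuclideanSpace ℝ (Fin n)}
    (hf : HasDerivAt f f' (‖x‖ ^ 2 + E)) :
    ∑ i, pd i (fun y => f (‖y‖ ^ 2 + E) * y i) x = 2 * f' * ‖x‖ ^ 2 + n * f (‖x‖ ^ 2 + E) := by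
  have h := hasFDerivAt_comp_norm_sq_add hf
  rw [sum_pd_mul_coord h.differentiableAt, h.fderiv]
  simp

end Calculus

noncomputable def barrierProfile (C T α u : ℝ) : ℝ := C * (T / u) ^ (1 / α)

section Profile

variable {C T α u : ℝ}

theorem barrierProfile_pos (hC : 0 < C) (hT : 0 < T) (hu : 0 < u) :
    0 < barrierProfile C T α u := by
  unfold barrierProfile; positivity

theorem hasDerivAt_barrierProfile (hT : 0 < T) (hu : 0 < u) :
    HasDerivAt (barrierProfile C T α) (-(barrierProfile C T α u / (α * u))) u := by
  have hTu : 0 < T / u := div_pos hT hu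
  have h := (((hasDerivAt_inv hu.ne').const_mul T).rpow_const (p := 1 / α)
    (Or.inl (by simpa [div_eq_mul_inv] using hTu.ne'))).const_mul C
  simp only [← div_eq_mul_inv] at h
  refine h.congr_deriv ?_
  rw [barrierProfile, Real.rpow_sub hTu, Real.rpow_one]
  field_simp

theorem barrierProfile_rpow_neg (hC : 0 < C) (hT : 0 < T) (hu : 0 < u) (hα : α ≠ 0) :
    barrierProfile C T α u ^ (-α) = u / (C ^ α * T) := by
  have hTu : 0 < T / u := div_pos hT hu
  have hexp : 1 / α * -α = -1 := by field_simp
  rw [barrierProfile, Real.mul_rpow hC.le (Real.rpow_nonneg hTu.le _), ← Real.rpow_mul hTu.le,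
    hexp, Real.rpow_neg_one, Real.rpow_neg hC.le, inv_div]
  field_simp

end Profile

section Barrier

variable {n : ℕ} {C T α E : ℝ}

theorem barrier_flux_eq (hC : 0 < C) (hT : 0 < T) (hα : α ≠ 0) (hE : 0 < E) (c : ℝ)
    (i : Fin n) (y : EuclideanSpace ℝ (Fin n)) :
    c * barrierProfile C T α (‖y‖ ^ 2 + E) ^ (-α) *
        pd i (fun z => barrierProfile C T α (‖z‖ ^ 2 + E)) y =
      -(2 * c / (α * C ^ α * T)) * barrierProfile C T α (‖y‖ ^ 2 + E) * y i := by
  have hu : 0 < ‖y‖ ^ 2 + E := by positivity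
  rw [barrierProfile_rpow_neg hC hT hu hα,
    pd_comp_norm_sq_add (hasDerivAt_barrierProfile hT hu)]
  field_simp

theorem sum_pd_barrier_flux (hC : 0 < C) (hT : 0 < T) (hα : α ≠ 0) (hE : 0 < E) (c : ℝ)
    (x : EuclideanSpace ℝ (Fin n)) :
    ∑ i, pd i (fun y => c * barrierProfile C T α (‖y‖ ^ 2 + E) ^ (-α) *
        pd i (fun z => barrierProfile C T α (‖z‖ ^ 2 + E)) y) x =
      -(2 * c / (α * C ^ α * T)) * (n - 2 * ‖x‖ ^ 2 / (α * (‖x‖ ^ 2 + E))) *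
        barrierProfile C T α (‖x‖ ^ 2 + E) := by
  have hu : 0 < ‖x‖ ^ 2 + E := by positivity
  simp_rw [barrier_flux_eq hC hT hα hE]
  rw [sum_pd_comp_norm_sq_add_mul_coord
    ((hasDerivAt_barrierProfile hT hu).const_mul (-(2 * c / (α * C ^ α * T))))]
  field_simp
  ring

theorem hasDerivAt_barrier_time {β R t : ℝ} (hT : 0 < T) (ht : 0 < t + T)
    (x : EuclideanSpace ℝ (Fin n)) (hu : 0 < ‖x‖ ^ 2 + R ^ 2 * (t + T) ^ β) :
    HasDerivAt (fun s => barrierProfile C T α (‖x‖ ^ 2 + R ^ 2 * (s + T) ^ β))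
      (-(β * (R ^ 2 * (t + T) ^ β) / ((t + T) * (‖x‖ ^ 2 + R ^ 2 * (t + T) ^ β))) *
        (barrierProfile C T α (‖x‖ ^ 2 + R ^ 2 * (t + T) ^ β) / α)) t := by
  have hinner := ((((hasDerivAt_id t).add_const T).rpow_const (p := β) (Or.inl ht.ne')).const_mul
    (R ^ 2)).const_add (‖x‖ ^ 2)
  refine ((hasDerivAt_barrierProfile hT hu).comp t hinner).congr_deriv ?_
  rw [id_eq, Real.rpow_sub ht, Real.rpow_one]
  field_simp

end Barrier

theorem barrier_defect_identity {n α T t N E P : ℝ} (hnα : 2 - n * α ≠ 0) (hα : α ≠ 0)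
    (hT : T ≠ 0) (htT : t + T ≠ 0) (hu : N + E ≠ 0) :
    -(4 / (2 - n * α) * E / ((t + T) * (N + E))) * (P / α) -
        -(1 / (T * (2 - n * α))) * (n - 2 * N / (α * (N + E))) * P =
      -((2 / (2 - n * α)) * E / (N + E) * ((T - t) / (T + t)) + 1) * (P / (T * α)) := by
  have hTt : T + t ≠ 0 := by rwa [add_comm]
  field_simp
  ring

theorem supercritical_barrier_subsolution_general (n : ℕ) (α R T : ℝ)
    (hα : 0 < α ∧ α < 2 / (n : ℝ)) (hR : 0 < R) (hT : 0 < T)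
    (Cα : ℝ) (hCpos : 0 < Cα)
    (hCα : Cα ^ α = 2 * (n : ℝ) ^ (α - 1) * (2 / α - (n : ℝ)))
    (Ψ : EuclideanSpace ℝ (Fin n) → ℝ → ℝ)
    (hΨ : ∀ x s, Ψ x s = Cα *
      (T / (‖x‖ ^ 2 + R ^ 2 * (s + T) ^ (4 / (2 - n * α)))) ^ (1 / α)) :
    ∀ (x : EuclideanSpace ℝ (Fin n)) (t : ℝ), 0 < t → t < T →
      (deriv (Ψ x) t -
          ∑ i, pd i (fun y =>
            (n : ℝ) ^ (α - 1) * (Ψ y t) ^ (-α) * pd i (fun z => Ψ z t) y) x =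
        -((2 / (2 - n * α)) *
            (R ^ 2 * (t + T) ^ (4 / (2 - n * α))) /
              (‖x‖ ^ 2 + R ^ 2 * (t + T) ^ (4 / (2 - n * α))) *
            ((T - t) / (T + t)) + 1) * (Ψ x t / (T * α))) ∧
      (deriv (Ψ x) t -
          ∑ i, pd i (fun y =>
            (n : ℝ) ^ (α - 1) * (Ψ y t) ^ (-α) * pd i (fun z => Ψ z t) y) x <
        -(Ψ x t / (T * α))) ∧
      (-(Ψ x t / (T * α)) < 0) := by
  intro x t ht htT
  obtain ⟨hα0, hαn⟩ := hα
  have hn : (0 : ℝ) < n := by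
    rcases n.eq_zero_or_pos with rfl | h
    · norm_num at hαn; linarith
    · exact_mod_cast h
  have hnα : 0 < 2 - n * α := by have := (lt_div_iff₀ hn).mp hαn; linarith
  set β := 4 / (2 - (n : ℝ) * α)
  set E := R ^ 2 * (t + T) ^ β
  have hE : 0 < E := by positivity
  have hu : 0 < ‖x‖ ^ 2 + E := by positivity
  obtain rfl : Ψ = fun x s => barrierProfile Cα T α (‖x‖ ^ 2 + R ^ 2 * (s + T) ^ β) :=
    funext₂ hΨ
  have hcoeff : 2 * (n : ℝ) ^ (α - 1) / (α * Cα ^ α * T) = 1 / (T * (2 - n * α)) := by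
    rw [hCα]; field_simp
  have hq : 0 < barrierProfile Cα T α (‖x‖ ^ 2 + E) / (T * α) :=
    div_pos (barrierProfile_pos hCpos hT hu) (mul_pos hT hα0)
  have hlower : 0 < (2 / (2 - n * α)) * E / (‖x‖ ^ 2 + E) * ((T - t) / (T + t)) := by
    have : 0 < T - t := by linarith
    positivity
  have hidentity : deriv (fun s => barrierProfile Cα T α (‖x‖ ^ 2 + R ^ 2 * (s + T) ^ β)) t -
      ∑ i, pd i (fun y => (n : ℝ) ^ (α - 1) * barrierProfile Cα T α (‖y‖ ^ 2 + E) ^ (-α) *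
        pd i (fun z => barrierProfile Cα T α (‖z‖ ^ 2 + E)) y) x =
      -((2 / (2 - n * α)) * E / (‖x‖ ^ 2 + E) * ((T - t) / (T + t)) + 1) *
        (barrierProfile Cα T α (‖x‖ ^ 2 + E) / (T * α)) := by
    rw [(hasDerivAt_barrier_time hT (by linarith) x hu).deriv,
      sum_pd_barrier_flux hCpos hT hα0.ne' hE, hcoeff]
    exact barrier_defect_identity hnα.ne' hα0.ne' hT.ne' (by linarith) hu.ne'
  refine ⟨hidentity, ?_, ?_⟩
  · rw [hidentity]
    nlinarith [mul_pos hlower hq]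
  · linarith

/-- Barrier identity in the supercritical range `α ∈ (0, 2/n)`, `n ≥ 2`, for
`Ψ(x,t) = C_α (T/(|x|²+R²(t+T)^{4/(2−nα)}))^{1/α}` with
`C_α^α = 2n^{α−1}(2/α − n)`: on `0 < t < T` the quantity
`∂_tΨ − ∑_i ∂_{x_i}(n^{α−1}Ψ^{−α}∂_{x_i}Ψ)` equals the displayed expression
and is `< −Ψ/(Tα) < 0`. -/
theorem supercritical_barrier_subsolution (n : ℕ) (hn : 2 ≤ n) (α R T : ℝ)
    (hα : 0 < α ∧ α < 2 / (n : ℝ)) (hR : 0 < R) (hT : 0 < T)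
    (Cα : ℝ) (hCpos : 0 < Cα)
    (hCα : Cα ^ α = 2 * (n : ℝ) ^ (α - 1) * (2 / α - (n : ℝ)))
    (Ψ : EuclideanSpace ℝ (Fin n) → ℝ → ℝ)
    (hΨ : ∀ x s, Ψ x s = Cα *
      (T / (‖x‖ ^ 2 + R ^ 2 * (s + T) ^ (4 / (2 - n * α)))) ^ (1 / α)) :
    ∀ (x : EuclideanSpace ℝ (Fin n)) (t : ℝ), 0 < t → t < T →
      (deriv (Ψ x) t -
          ∑ i, pd i (fun y =>
            (n : ℝ) ^ (α - 1) * (Ψ y t) ^ (-α) * pd i (fun z => Ψ z t) y) x =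
        -((2 / (2 - n * α)) *
            (R ^ 2 * (t + T) ^ (4 / (2 - n * α))) /
              (‖x‖ ^ 2 + R ^ 2 * (t + T) ^ (4 / (2 - n * α))) *
            ((T - t) / (T + t)) + 1) * (Ψ x t / (T * α))) ∧
      (deriv (Ψ x) t -
          ∑ i, pd i (fun y =>
            (n : ℝ) ^ (α - 1) * (Ψ y t) ^ (-α) * pd i (fun z => Ψ z t) y) x <
        -(Ψ x t / (T * α))) ∧
      (-(Ψ x t / (T * α)) < 0) :=
  supercritical_barrier_subsolution_general n α R T hα hR hT Cα hCpos hCα Ψ hΨ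
end

section
/- Let n ≥ 2, R > 0, T > 0, and let ĉ, c̄ be constants with 0 < ĉ < 1 and c̄ > ĉ. Define Ψ̄(x,t) = R² (4π(T−t))^{−(n/2)c̄} e^{ĉ n |x|²/(4(T−t))}. Then for all x ∈ ℝⁿ and 0 ≤ t < T one has the identity ∂_t Ψ̄ − (1/n) ΔΨ̄ = [ (ĉ(1−ĉ)/2) · |x|²/(T−t)² + (c̄−ĉ) · 1/(T−t) ] · (n/2) Ψ̄, and there exists a constant c₁ > 0 depending only on ĉ and c̄ such that ∂_t Ψ̄ − (1/n) ΔΨ̄ ≥ c₁ [ 1/(T−t) + |x|²/(T−t)² ] Ψ̄ > 0; that is, Ψ̄ is a strict supersolution of the heat equation ∂_t ρ = (1/n) Δρ on ℝⁿ × [0, T). -/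
open Real

theorem hasFDerivAt_const_mul_exp_mul_norm_sq {E : Type*} [NormedAddCommGroup E]
    [InnerProductSpace ℝ E] (K c : ℝ) (x : E) :
    HasFDerivAt (fun z : E => K * exp (c * ‖z‖ ^ 2))
      ((K * exp (c * ‖x‖ ^ 2) * (2 * c)) • innerSL ℝ x) x := by
  refine (((hasFDerivAt_id x).norm_sq.const_mul c).exp.const_mul K).congr_fderiv ?_
  ext v
  simp
  ring

section Gaussian

variable {n : ℕ} (K c : ℝ) (i : Fin n) (x : EuclideanSpace ℝ (Fin n))

theorem pd_const_mul_exp_mul_norm_sq :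
    pd i (fun z => K * exp (c * ‖z‖ ^ 2)) x = K * exp (c * ‖x‖ ^ 2) * (2 * c) * x i := by
  rw [pd, (hasFDerivAt_const_mul_exp_mul_norm_sq K c x).fderiv]
  simp [EuclideanSpace.inner_single_right]

theorem pd_pd_const_mul_exp_mul_norm_sq :
    pd i (fun y => pd i (fun z => K * exp (c * ‖z‖ ^ 2)) y) x
      = K * exp (c * ‖x‖ ^ 2) * (2 * c + 4 * c ^ 2 * x i ^ 2) := by
  simp only [pd_const_mul_exp_mul_norm_sq]
  have hcoord : HasFDerivAt (fun y : EuclideanSpace ℝ (Fin n) => y i)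
      (EuclideanSpace.proj i : EuclideanSpace ℝ (Fin n) →L[ℝ] ℝ) x := by
    simpa using (EuclideanSpace.proj i : EuclideanSpace ℝ (Fin n) →L[ℝ] ℝ).hasFDerivAt (x := x)
  have hprod : HasFDerivAt (fun y => K * exp (c * ‖y‖ ^ 2) * (2 * c) * y i) _ x :=
    ((hasFDerivAt_const_mul_exp_mul_norm_sq K c x).mul_const (2 * c)).mul hcoord
  rw [pd, hprod.fderiv]
  simp [EuclideanSpace.inner_single_right]
  ring

theorem laplacian_const_mul_exp_mul_norm_sq :
    ∑ i, pd i (fun y => pd i (fun z => K * exp (c * ‖z‖ ^ 2)) y) x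
      = K * exp (c * ‖x‖ ^ 2) * (2 * c * n + 4 * c ^ 2 * ‖x‖ ^ 2) := by
  have hcoords : ∑ i, x i ^ 2 = ‖x‖ ^ 2 := (EuclideanSpace.real_norm_sq_eq x).symm
  simp only [pd_pd_const_mul_exp_mul_norm_sq, ← Finset.mul_sum, Finset.sum_add_distrib, hcoords,
    Finset.sum_const, Finset.card_univ, Fintype.card_fin, nsmul_eq_mul]
  ring

end Gaussian

theorem hasDerivAt_rpow_mul_exp_div_sub {a β M T t : ℝ} (ha : a ≠ 0) (ht : t ≠ T) :
    HasDerivAt (fun s => (a * (T - s)) ^ β * exp (M / (T - s)))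
      ((a * (T - t)) ^ β * exp (M / (T - t)) * (M / (T - t) ^ 2 - β / (T - t))) t := by
  have hτ : T - t ≠ 0 := sub_ne_zero.mpr ht.symm
  have hsub : HasDerivAt (fun s => T - s) (-1) t := by
    simpa using (hasDerivAt_id t).const_sub T
  have hpow := (hsub.const_mul a).rpow_const (p := β) (Or.inl (mul_ne_zero ha hτ))
  have hexp : HasDerivAt (fun s => exp (M / (T - s)))
      (exp (M / (T - t)) * ((0 * (T - t) - M * -1) / (T - t) ^ 2)) t :=
    ((hasDerivAt_const t M).div hsub hτ).exp
  refine (hpow.mul hexp).congr_deriv ?_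
  rw [rpow_sub_one (mul_ne_zero ha hτ)]
  field_simp
  ring

section HeatGaussian

variable {n : ℕ} {R T ch cb t : ℝ} (x : EuclideanSpace ℝ (Fin n))

variable (n R T ch cb) in
noncomputable def heatGaussian (x : EuclideanSpace ℝ (Fin n)) (s : ℝ) : ℝ :=
  R ^ 2 * (4 * π * (T - s)) ^ (-((n : ℝ) / 2) * cb) * exp ((ch * n * ‖x‖ ^ 2) / (4 * (T - s)))

theorem heatGaussian_pos (hR : R ≠ 0) (ht : t < T) : 0 < heatGaussian n R T ch cb x t := by
  have hτ : 0 < T - t := sub_pos.mpr ht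
  have hpow := rpow_pos_of_pos (by positivity : 0 < 4 * π * (T - t)) (-((n : ℝ) / 2) * cb)
  unfold heatGaussian
  positivity

theorem hasDerivAt_heatGaussian (ht : t < T) :
    HasDerivAt (heatGaussian n R T ch cb x)
      (heatGaussian n R T ch cb x t *
        (ch * n * ‖x‖ ^ 2 / (4 * (T - t) ^ 2) + n / 2 * cb / (T - t))) t := by
  have h := (hasDerivAt_rpow_mul_exp_div_sub (M := ch * n * ‖x‖ ^ 2 / 4)
    (β := -((n : ℝ) / 2) * cb) (mul_ne_zero four_ne_zero pi_ne_zero) ht.ne).const_mul (R ^ 2)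
  have hfun : heatGaussian n R T ch cb x = fun s =>
      R ^ 2 * ((4 * π * (T - s)) ^ (-((n : ℝ) / 2) * cb) * exp (ch * n * ‖x‖ ^ 2 / 4 / (T - s))) := by
    funext s
    simp only [heatGaussian, div_div, mul_assoc]
  rw [hfun]
  refine h.congr_deriv ?_
  simp only [div_div]
  ring

variable (t) in
theorem heatGaussian_eq_const_mul_exp :
    (heatGaussian n R T ch cb · t) = fun z =>
      R ^ 2 * (4 * π * (T - t)) ^ (-((n : ℝ) / 2) * cb) * exp (ch * n / (4 * (T - t)) * ‖z‖ ^ 2) := by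
  funext z
  rw [heatGaussian, mul_div_right_comm]

theorem laplacian_heatGaussian :
    ∑ i, pd i (fun y => pd i (heatGaussian n R T ch cb · t) y) x
      = heatGaussian n R T ch cb x t *
        (ch * n ^ 2 / (2 * (T - t)) + ch ^ 2 * n ^ 2 * ‖x‖ ^ 2 / (4 * (T - t) ^ 2)) := by
  rw [heatGaussian_eq_const_mul_exp, laplacian_const_mul_exp_mul_norm_sq,
    congrFun (heatGaussian_eq_const_mul_exp t) x]
  simp only [div_eq_mul_inv, mul_inv, ← inv_pow]
  ring

theorem heat_operator_heatGaussian (hn : n ≠ 0) (ht : t < T) :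
    deriv (heatGaussian n R T ch cb x) t -
        (1 / (n : ℝ)) * ∑ i, pd i (fun y => pd i (heatGaussian n R T ch cb · t) y) x =
      ((ch * (1 - ch) / 2) * ‖x‖ ^ 2 / (T - t) ^ 2 + (cb - ch) * (1 / (T - t))) *
        ((n : ℝ) / 2) * heatGaussian n R T ch cb x t := by
  have hτ : T - t ≠ 0 := sub_ne_zero.mpr ht.ne'
  rw [(hasDerivAt_heatGaussian x ht).deriv, laplacian_heatGaussian]
  field_simp
  ring

end HeatGaussian

theorem min_mul_add_le {a b u v : ℝ} (hu : 0 ≤ u) (hv : 0 ≤ v) :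
    min a b * (u + v) ≤ a * u + b * v := by
  rw [mul_add]
  gcongr
  exacts [min_le_left a b, min_le_right a b]

/-- Growing Gaussian supersolution of the heat equation `∂_tρ = (1/n)Δρ`
(the case `α = 0`): for `0 < ĉ < 1` and `c̄ > ĉ` there is a constant
`c₁ > 0`, depending only on `ĉ` and `c̄`, such that for every `n ≥ 2`,
`R, T > 0`, the function
`Ψ̄(x,t) = R²(4π(T−t))^{−(n/2)c̄} e^{ĉn|x|²/(4(T−t))}` satisfies, for all `x`
and `0 ≤ t < T`, the identity
`∂_tΨ̄ − (1/n)ΔΨ̄ = [(ĉ(1−ĉ)/2)|x|²/(T−t)² + (c̄−ĉ)/(T−t)]·(n/2)Ψ̄`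
together with `∂_tΨ̄ − (1/n)ΔΨ̄ ≥ c₁[1/(T−t)+|x|²/(T−t)²]Ψ̄ > 0`. -/
theorem gaussian_heat_supersolution (ch cb : ℝ) (h0 : 0 < ch) (h1 : ch < 1)
    (h2 : ch < cb) :
    ∃ c₁ > (0 : ℝ), ∀ n : ℕ, 2 ≤ n → ∀ R T : ℝ, 0 < R → 0 < T →
      ∀ Ψ : EuclideanSpace ℝ (Fin n) → ℝ → ℝ,
      (∀ x s, Ψ x s = R ^ 2 * (4 * Real.pi * (T - s)) ^ (-((n : ℝ) / 2) * cb) *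
        Real.exp ((ch * n * ‖x‖ ^ 2) / (4 * (T - s)))) →
      ∀ (x : EuclideanSpace ℝ (Fin n)) (t : ℝ), 0 ≤ t → t < T →
        (deriv (Ψ x) t -
            (1 / (n : ℝ)) * ∑ i, pd i (fun y => pd i (fun z => Ψ z t) y) x =
          ((ch * (1 - ch) / 2) * ‖x‖ ^ 2 / (T - t) ^ 2 +
              (cb - ch) * (1 / (T - t))) * ((n : ℝ) / 2) * Ψ x t) ∧
        (deriv (Ψ x) t -
            (1 / (n : ℝ)) * ∑ i, pd i (fun y => pd i (fun z => Ψ z t) y) x ≥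
          c₁ * (1 / (T - t) + ‖x‖ ^ 2 / (T - t) ^ 2) * Ψ x t) ∧
        (c₁ * (1 / (T - t) + ‖x‖ ^ 2 / (T - t) ^ 2) * Ψ x t > 0) := by
  have hc₁ : 0 < min (cb - ch) (ch * (1 - ch) / 2) :=
    lt_min (sub_pos.mpr h2) (by have := sub_pos.mpr h1; positivity)
  refine ⟨_, hc₁, fun n hn R T hR _ Ψ hΨ x t _ ht => ?_⟩
  obtain rfl : Ψ = heatGaussian n R T ch cb := funext fun x => funext (hΨ x)
  have hτ : 0 < T - t := sub_pos.mpr ht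
  have hΨpos : 0 < heatGaussian n R T ch cb x t := heatGaussian_pos x hR.ne' ht
  have hbracket : min (cb - ch) (ch * (1 - ch) / 2) * (1 / (T - t) + ‖x‖ ^ 2 / (T - t) ^ 2) ≤
      ch * (1 - ch) / 2 * ‖x‖ ^ 2 / (T - t) ^ 2 + (cb - ch) * (1 / (T - t)) := by
    convert min_mul_add_le (a := cb - ch) (b := ch * (1 - ch) / 2)
      (one_div_pos.mpr hτ).le (by positivity : 0 ≤ ‖x‖ ^ 2 / (T - t) ^ 2) using 1
    ring
  have hn2 : (1 : ℝ) ≤ n / 2 := by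
    rw [le_div_iff₀ two_pos, one_mul]
    exact_mod_cast hn
  rw [heat_operator_heatGaussian x (by omega) ht]
  refine ⟨rfl, ?_, mul_pos (mul_pos hc₁ (by positivity)) hΨpos⟩
  have hbracket_nonneg := (mul_pos hc₁ (by positivity)).le.trans hbracket
  exact mul_le_mul_of_nonneg_right (hbracket.trans (le_mul_of_one_le_right hbracket_nonneg hn2))
    hΨpos.le
end

section
/- Let n ≥ 1 be an integer and α ≥ −1. Define the map A : (0,∞)^{2n} → ℝ^{2n} by (A u)_i = Σ_{j=1}^{2n} ( u_j^{α+1} − u_i^{α+1} ). Then A is T-dissipative: for all u, v ∈ (0,∞)^{2n}, Σ_{i=1}^{2n} ((A u)_i − (A v)_i) · sgn⁺(u_i − v_i) ≤ 0. -/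
/-- T-dissipativity of the interaction map
`(A u)_i = ∑_j (u_j^{α+1} − u_i^{α+1})` on `(0,∞)^{2n}` for `α ≥ −1`:
`∑_i ((A u)_i − (A v)_i) · sgn⁺(u_i − v_i) ≤ 0`. -/
theorem power_interaction_T_dissipative (n : ℕ) (hn : 1 ≤ n) (α : ℝ)
    (hα : -1 ≤ α)
    (u v : Fin (2 * n) → ℝ) (hu : ∀ i, 0 < u i) (hv : ∀ i, 0 < v i) :
    ∑ i, ((∑ j, ((u j) ^ (α + 1) - (u i) ^ (α + 1))) -
        (∑ j, ((v j) ^ (α + 1) - (v i) ^ (α + 1)))) * sgnPlus (u i - v i) ≤ 0 := by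
  set p := α + 1 with hp
  have hp0 : 0 ≤ p := by linarith
  set d : Fin (2*n) → ℝ := fun i => u i ^ p - v i ^ p with hd
  set s : Fin (2*n) → ℝ := fun i => sgnPlus (u i - v i) with hs
  set S : ℝ := (∑ j, u j ^ p) - (∑ j, v j ^ p) with hS
  have hs0 : ∀ i, 0 ≤ s i := by
    intro i; simp only [hs, sgnPlus]; split <;> norm_num
  have hs1 : ∀ i, s i ≤ 1 := by
    intro i; simp only [hs, sgnPlus]; split <;> norm_num
  have hds : ∀ i, d i * s i = max (d i) 0 := by
    intro i
    by_cases h : 0 < u i - v i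
    · have hle : v i ≤ u i := by linarith
      have hdge : 0 ≤ d i := by
        have := Real.rpow_le_rpow (le_of_lt (hv i)) hle hp0
        simp only [hd]; linarith
      have hsi : s i = 1 := by simp only [hs, sgnPlus, if_pos h]
      rw [hsi, mul_one, max_eq_left hdge]
    · have hle : u i ≤ v i := by linarith
      have hdle : d i ≤ 0 := by
        have := Real.rpow_le_rpow (le_of_lt (hu i)) hle hp0
        simp only [hd]; linarith
      have hsi : s i = 0 := by simp only [hs, sgnPlus, if_neg h]
      rw [hsi, mul_zero, max_eq_right hdle]
  have hterm : ∀ i : Fin (2*n),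
      ((∑ j, ((u j) ^ p - (u i) ^ p)) - (∑ j, ((v j) ^ p - (v i) ^ p)))
        * sgnPlus (u i - v i) = (S - ((2*n : ℕ) : ℝ) * d i) * s i := by
    intro i
    have h1 : (∑ j : Fin (2*n), ((u j) ^ p - (u i) ^ p))
        = (∑ j, u j ^ p) - ((2*n : ℕ) : ℝ) * u i ^ p := by
      rw [Finset.sum_sub_distrib]
      simp [Finset.card_univ]
    have h2 : (∑ j : Fin (2*n), ((v j) ^ p - (v i) ^ p))
        = (∑ j, v j ^ p) - ((2*n : ℕ) : ℝ) * v i ^ p := by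
      rw [Finset.sum_sub_distrib]
      simp [Finset.card_univ]
    rw [h1, h2]
    simp only [hd, hS, hs]
    ring
  calc ∑ i, ((∑ j, ((u j) ^ p - (u i) ^ p)) -
        (∑ j, ((v j) ^ p - (v i) ^ p))) * sgnPlus (u i - v i)
      = ∑ i, (S - ((2*n : ℕ) : ℝ) * d i) * s i := by
        exact Finset.sum_congr rfl fun i _ => hterm i
    _ = S * (∑ i, s i) - ((2*n : ℕ) : ℝ) * ∑ i, d i * s i := by
        rw [Finset.mul_sum, Finset.mul_sum, ← Finset.sum_sub_distrib]
        exact Finset.sum_congr rfl fun i _ => by ring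
    _ ≤ 0 := by
        set K : ℝ := ∑ i, s i with hK
        set M : ℝ := ∑ i, max (d i) 0 with hM
        have hsum : (∑ i, d i * s i) = M := Finset.sum_congr rfl fun i _ => hds i
        rw [hsum]
        have hK0 : 0 ≤ K := Finset.sum_nonneg fun i _ => hs0 i
        have hKN : K ≤ ((2*n : ℕ) : ℝ) := by
          calc K ≤ ∑ _i : Fin (2*n), (1 : ℝ) := Finset.sum_le_sum fun i _ => hs1 i
            _ = ((2*n : ℕ) : ℝ) := by simp
        have hM0 : 0 ≤ M := Finset.sum_nonneg fun i _ => le_max_right _ _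
        have hSM : S ≤ M := by
          have : S = ∑ i, d i := by
            rw [hS, ← Finset.sum_sub_distrib]
          rw [this]
          exact Finset.sum_le_sum fun i _ => le_max_left _ _
        nlinarith [mul_le_mul_of_nonneg_right hSM hK0,
          mul_le_mul_of_nonneg_left hKN hM0]
end
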